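/- arXiv:1409.4525 — 3 statements merged into one kernel-verified Lean document; each statement's English description precedes it below -/
import Mathlib

section
/- Let α > 0 and let p : ℝ → ℝ be an odd function which is C¹ on ℝ and C² on ℝ \ {0}. Assume there exist A ≥ 1 and constants 0 < c ≤ C such that for all ξ with |ξ| ≥ A one has c|ξ|^α ≤ |p′(ξ)| ≤ C|ξ|^α and c|ξ|^{α−1} ≤ |p″(ξ)| ≤ C|ξ|^{α−1}. Then there exist A′ ≥ 1, λ₀ ∈ (0,1] and constants 0 < c′ ≤ C′ such that for all (ξ₁, ξ₂) ∈ ℝ² with max(|ξ₁|, |ξ₂|) ≥ A′ and all λ ∈ (0, λ₀], one has c′ |ξ|_min |ξ|_max^α ≤ λ^{α+1} |Ω(ξ₁/λ, ξ₂/λ)| ≤ C′ |ξ|_min |ξ|_max^α. -/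
noncomputable section
open Real

/-- The resonance function associated with a symbol `p`. -/
def Omega (p : ℝ → ℝ) (ξ₁ ξ₂ : ℝ) : ℝ := p (ξ₁ + ξ₂) - p ξ₁ - p ξ₂

/-- `|ξ|_min`: the minimum of `|ξ₁|, |ξ₂|, |ξ₁+ξ₂|`. -/
def ximin (ξ₁ ξ₂ : ℝ) : ℝ := min (min |ξ₁| |ξ₂|) |ξ₁ + ξ₂|

/-- `|ξ|_max`: the maximum of `|ξ₁|, |ξ₂|, |ξ₁+ξ₂|`. -/
def ximax (ξ₁ ξ₂ : ℝ) : ℝ := max (max |ξ₁| |ξ₂|) |ξ₁ + ξ₂|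

/-!
For `0 ≤ a ≤ b` write `Ω(a, b) = ∫₀ᵃ (p'(b + t) - p'(t)) dt`. The bounds `|p'(ξ)| ≈ |ξ|^α` give
`|Ω(a, b)| ≲ a b^α` at once. Since `p''` does not vanish for large `ξ`, Darboux's theorem makes
`p'` eventually of one sign (positive, after replacing `p` by `-p`) and, as it is unbounded,
increasing; so the integrand is nonnegative, and it is `≳ b^α` for `t ≤ δ b` with `δ` small,
which gives `Ω(a, b) ≳ a b^α`. Oddness of `p` makes `|Ω|`, `|ξ|_min` and `|ξ|_max` invariant
under permutations of `(ξ₁, ξ₂, -(ξ₁ + ξ₂))` and under `ξ ↦ -ξ`, which reduces every pair to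
this case. Finally `|ξ|_min |ξ|_max^α` is homogeneous of degree `α + 1`, and rescaling by
`λ ≤ 1` only increases `max(|ξ₁|, |ξ₂|)`.
-/

open Set Filter Topology

lemma omega_comm (p : ℝ → ℝ) (x y : ℝ) : Omega p x y = Omega p y x := by
  unfold Omega; rw [add_comm]; ring

lemma omega_neg_neg {p : ℝ → ℝ} (hodd : ∀ ξ, p (-ξ) = -p ξ) (x y : ℝ) :
    Omega p (-x) (-y) = -Omega p x y := by
  simp only [Omega, ← neg_add, hodd]; ring

lemma omega_neg_add {p : ℝ → ℝ} (hodd : ∀ ξ, p (-ξ) = -p ξ) (x y : ℝ) :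
    Omega p x (-(x + y)) = Omega p x y := by
  simp only [Omega, show x + -(x + y) = -y by ring, hodd]; ring

lemma omega_neg (p : ℝ → ℝ) (x y : ℝ) : Omega (-p) x y = -Omega p x y := by
  simp only [Omega, Pi.neg_apply]; ring

lemma ximin_comm (x y : ℝ) : ximin x y = ximin y x := by
  rw [ximin, ximin, min_comm |x|, add_comm]

lemma ximin_neg_neg (x y : ℝ) : ximin (-x) (-y) = ximin x y := by
  rw [ximin, ximin, ← neg_add, abs_neg, abs_neg, abs_neg]

lemma ximin_neg_add (x y : ℝ) : ximin x (-(x + y)) = ximin x y := by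
  rw [ximin, ximin, show x + -(x + y) = -y by ring, abs_neg, abs_neg, min_right_comm]

lemma ximax_comm (x y : ℝ) : ximax x y = ximax y x := by
  rw [ximax, ximax, max_comm |x|, add_comm]

lemma ximax_neg_neg (x y : ℝ) : ximax (-x) (-y) = ximax x y := by
  rw [ximax, ximax, ← neg_add, abs_neg, abs_neg, abs_neg]

lemma ximax_neg_add (x y : ℝ) : ximax x (-(x + y)) = ximax x y := by
  rw [ximax, ximax, show x + -(x + y) = -y by ring, abs_neg, abs_neg, max_right_comm]

lemma ximin_of_nonneg_of_le {x y : ℝ} (hx : 0 ≤ x) (hxy : x ≤ y) : ximin x y = x := by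
  rw [ximin, abs_of_nonneg hx, abs_of_nonneg (hx.trans hxy), abs_of_nonneg (by linarith),
    min_eq_left hxy, min_eq_left (by linarith)]

lemma ximax_of_nonneg {x y : ℝ} (hx : 0 ≤ x) (hy : 0 ≤ y) : ximax x y = x + y := by
  rw [ximax, abs_of_nonneg hx, abs_of_nonneg hy, abs_of_nonneg (by linarith)]
  exact max_eq_right (max_le (by linarith) (by linarith))

lemma ximax_nonneg (x y : ℝ) : 0 ≤ ximax x y :=
  (abs_nonneg _).trans (le_max_right _ _)

lemma ximin_div (x y : ℝ) {r : ℝ} (hr : 0 < r) : ximin (x / r) (y / r) = ximin x y / r := by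
  simp only [ximin, ← add_div, abs_div, abs_of_pos hr, min_div_div_right hr.le]

lemma ximax_div (x y : ℝ) {r : ℝ} (hr : 0 < r) : ximax (x / r) (y / r) = ximax x y / r := by
  simp only [ximax, ← add_div, abs_div, abs_of_pos hr, max_div_div_right hr.le]

/-- Among `x`, `y` and `-(x + y)` two have the same sign, so up to the symmetries of the triple
and a global sign change, any pair is a pair `0 ≤ x ≤ y`. -/
theorem forall_of_nonneg_le_of_invariant {P : ℝ → ℝ → Prop}
    (hswap : ∀ x y, P x y → P y x) (hneg_add : ∀ x y, P x (-(x + y)) → P x y)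
    (hneg_neg : ∀ x y, P (-x) (-y) → P x y) (hbase : ∀ x y, 0 ≤ x → x ≤ y → P x y)
    (x y : ℝ) : P x y := by
  have hnonneg : ∀ x y, 0 ≤ x → 0 ≤ y → P x y := fun x y hx hy =>
    (le_total x y).elim (hbase x y hx) fun h => hswap _ _ (hbase y x hy h)
  have hfst : ∀ x y, 0 ≤ x → P x y := by
    intro x y hx
    rcases le_total 0 y with hy | hy
    · exact hnonneg x y hx hy
    rcases le_total (x + y) 0 with hs | hs
    · exact hneg_add x y (hnonneg x _ hx (by linarith))
    · refine hswap _ _ (hneg_add y x (hneg_neg _ _ ?_))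
      rw [neg_neg]
      exact hnonneg _ _ (by linarith) (by linarith)
  rcases le_total 0 x with hx | hx
  · exact hfst x y hx
  · exact hneg_neg x y (hfst _ _ (by linarith))

theorem abs_omega_bounds_of_ximax_ge {p : ℝ → ℝ} {α B c₁ C₁ : ℝ} (hα : 0 < α) (hc₁ : 0 < c₁)
    (hodd : ∀ ξ, p (-ξ) = -p ξ)
    (hbounds : ∀ a b, 0 ≤ a → a ≤ b → B ≤ b →
      c₁ * a * b ^ α ≤ |Omega p a b| ∧ |Omega p a b| ≤ C₁ * a * b ^ α) :
    ∃ c' C' : ℝ, 0 < c' ∧ c' ≤ C' ∧ ∀ x y, 2 * B ≤ ximax x y →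
      c' * ximin x y * ximax x y ^ α ≤ |Omega p x y| ∧
      |Omega p x y| ≤ C' * ximin x y * ximax x y ^ α := by
  refine ⟨c₁ / 2 ^ α, max (c₁ / 2 ^ α) C₁, by positivity, le_max_left _ _,
    forall_of_nonneg_le_of_invariant (P := fun x y => 2 * B ≤ ximax x y → _) ?_ ?_ ?_ ?_⟩
  · intro x y h
    simpa only [ximin_comm x, ximax_comm x, omega_comm p x] using h
  · intro x y h
    simpa only [ximin_neg_add, ximax_neg_add, omega_neg_add hodd] using h
  · intro x y h
    simpa only [ximin_neg_neg, ximax_neg_neg, omega_neg_neg hodd, abs_neg] using h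
  intro x y hx hxy hB
  have hy := hx.trans hxy
  rw [ximax_of_nonneg hx hy] at hB ⊢
  rw [ximin_of_nonneg_of_le hx hxy]
  obtain ⟨hlower, hupper⟩ := hbounds x y hx hxy (by linarith)
  have hsum : (x + y) ^ α ≤ 2 ^ α * y ^ α := by
    rw [← mul_rpow zero_le_two hy]
    exact rpow_le_rpow (by linarith) (by linarith) hα.le
  have hy_sum : y ^ α ≤ (x + y) ^ α := rpow_le_rpow hy (by linarith) hα.le
  constructor
  · calc c₁ / 2 ^ α * x * (x + y) ^ α ≤ c₁ / 2 ^ α * x * (2 ^ α * y ^ α) := by gcongr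
      _ = c₁ * x * y ^ α := by field_simp
      _ ≤ |Omega p x y| := hlower
  · calc |Omega p x y| ≤ C₁ * x * y ^ α := hupper
      _ ≤ max (c₁ / 2 ^ α) C₁ * x * (x + y) ^ α := by gcongr; exact le_max_right _ _

lemma exists_mul_rpow_le {α : ℝ} (hα : 0 < α) (C : ℝ) {ε : ℝ} (hε : 0 < ε) :
    ∃ δ ∈ Ioc (0 : ℝ) 1, C * δ ^ α ≤ ε := by
  have hlim : Tendsto (fun δ : ℝ => C * δ ^ α) (𝓝[>] 0) (𝓝 0) := by
    have := ((continuousAt_rpow_const 0 α (Or.inr hα.le)).const_mul C).tendsto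
    rw [zero_rpow hα.ne', mul_zero] at this
    exact this.mono_left nhdsWithin_le_nhds
  obtain ⟨δ, hδ, hδ1⟩ := ((hlim.eventually (ge_mem_nhds hε)).and (Ioc_mem_nhdsGT one_pos)).exists
  exact ⟨δ, hδ1, hδ⟩

theorem integral_sub_bounds_of_monotoneOn {f : ℝ → ℝ} {α A c C : ℝ} (hα : 0 < α) (hc : 0 < c)
    (hf : Continuous f) (hmono : MonotoneOn f (Ici A))
    (hlow : ∀ x, A ≤ x → c * x ^ α ≤ f x) (hup : ∀ x, A ≤ x → f x ≤ C * x ^ α) :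
    ∃ B c₁ C₁ : ℝ, 0 < c₁ ∧ ∀ a b, 0 ≤ a → a ≤ b → B ≤ b →
      c₁ * a * b ^ α ≤ ∫ t in (0 : ℝ)..a, (f (b + t) - f t) ∧
      ∫ t in (0 : ℝ)..a, (f (b + t) - f t) ≤ C₁ * a * b ^ α := by
  obtain ⟨M, hM⟩ := isCompact_Icc.exists_bound_of_continuousOn (hf.continuousOn (s := Icc 0 A))
  obtain ⟨δ, ⟨hδ0, hδ1⟩, hδC⟩ := exists_mul_rpow_le hα C (half_pos hc)
  obtain ⟨B, hB⟩ := eventually_atTop.1 <| (eventually_ge_atTop 0).and <|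
    ((tendsto_id.const_mul_atTop hδ0).eventually_ge_atTop A).and <|
      ((tendsto_rpow_atTop hα).const_mul_atTop (half_pos hc)).eventually_ge_atTop M
  refine ⟨B, c * δ / 2, C * 2 ^ α + c / 2, by positivity, fun a b ha hab hb => ?_⟩
  obtain ⟨hb0, hδb, hMb⟩ : 0 ≤ b ∧ A ≤ δ * b ∧ M ≤ c / 2 * b ^ α := hB b hb
  have hbA : A ≤ b := hδb.trans (mul_le_of_le_one_left hb0 hδ1)
  have hsmall : ∀ t ∈ Icc 0 (δ * b), f t ≤ c / 2 * b ^ α := by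
    rintro t ⟨ht0, htδ⟩
    rcases le_total t A with htA | htA
    · exact (le_abs_self _).trans ((hM t ⟨ht0, htA⟩).trans hMb)
    calc f t ≤ f (δ * b) := hmono htA hδb htδ
      _ ≤ C * (δ * b) ^ α := hup _ hδb
      _ = C * δ ^ α * b ^ α := by rw [mul_rpow hδ0.le hb0]; ring
      _ ≤ c / 2 * b ^ α := by gcongr
  have hlarge : ∀ t, 0 ≤ t → c * b ^ α ≤ f (b + t) := fun t ht =>
    (hlow b hbA).trans (hmono hbA (mem_Ici.2 (by linarith)) (by linarith))
  have hgap : ∀ t ∈ Icc 0 (δ * b), c / 2 * b ^ α ≤ f (b + t) - f t := fun t ht => by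
    linarith [hsmall t ht, hlarge t ht.1]
  have hgap_nonneg : ∀ t ∈ Icc 0 a, 0 ≤ f (b + t) - f t := by
    rintro t ⟨ht0, hta⟩
    rcases le_total t (δ * b) with htδ | htδ
    · exact (by positivity : 0 ≤ c / 2 * b ^ α).trans (hgap t ⟨ht0, htδ⟩)
    · exact sub_nonneg.2 (hmono (hδb.trans htδ) (mem_Ici.2 (by linarith)) (by linarith))
  have hgap_le : ∀ t ∈ Icc 0 a, f (b + t) - f t ≤ (C * 2 ^ α + c / 2) * b ^ α := by
    rintro t ⟨ht0, hta⟩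
    have hneg : -f t ≤ c / 2 * b ^ α := by
      rcases le_total t A with htA | htA
      · exact (neg_le_abs _).trans ((hM t ⟨ht0, htA⟩).trans hMb)
      · linarith [hlow t htA, (by positivity : 0 ≤ c * t ^ α), (by positivity : 0 ≤ c / 2 * b ^ α)]
    have h2b : f (b + t) ≤ C * 2 ^ α * b ^ α := by
      calc f (b + t) ≤ f (2 * b) := hmono (mem_Ici.2 (by linarith))
            (mem_Ici.2 (by linarith)) (by linarith)
        _ ≤ C * (2 * b) ^ α := hup _ (by linarith)
        _ = C * 2 ^ α * b ^ α := by rw [mul_rpow zero_le_two hb0]; ring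
    linarith
  have hint : ∀ u v, IntervalIntegrable (fun t => f (b + t) - f t) MeasureTheory.volume u v :=
    fun u v => ((hf.comp (continuous_const_add b)).sub hf).intervalIntegrable u v
  have hδa : δ * a ≤ a := mul_le_of_le_one_left ha hδ1
  constructor
  · have hfirst := intervalIntegral.integral_mono_on (by positivity) intervalIntegrable_const
      (hint 0 (δ * a)) fun t ht => hgap t ⟨ht.1, ht.2.trans (by gcongr)⟩
    have hsecond : 0 ≤ ∫ t in δ * a..a, (f (b + t) - f t) :=
      intervalIntegral.integral_nonneg hδa fun t ht =>
        hgap_nonneg t ⟨(mul_nonneg hδ0.le ha).trans ht.1, ht.2⟩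
    rw [intervalIntegral.integral_const, smul_eq_mul, sub_zero] at hfirst
    rw [← intervalIntegral.integral_add_adjacent_intervals (hint 0 (δ * a)) (hint (δ * a) a)]
    linarith
  · have h := intervalIntegral.integral_mono_on ha (hint 0 a) intervalIntegrable_const hgap_le
    rw [intervalIntegral.integral_const, smul_eq_mul, sub_zero] at h
    linarith

/-- By Darboux's theorem `f'` has a constant sign on `(A, ∞)`, and `f` cannot decrease there
since it tends to `∞`. -/
theorem monotoneOn_Ici_of_deriv_ne_zero {f : ℝ → ℝ} {A : ℝ} (hf : ContinuousOn f (Ici A))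
    (hdiff : ∀ x ∈ Ioi A, DifferentiableAt ℝ f x) (hf' : ∀ x ∈ Ioi A, deriv f x ≠ 0)
    (htop : Tendsto f atTop atTop) : MonotoneOn f (Ici A) := by
  rcases hasDerivWithinAt_forall_lt_or_forall_gt_of_forall_ne (convex_Ioi A)
    (fun x hx => (hdiff x hx).hasDerivAt.hasDerivWithinAt) hf' with hneg | hpos
  · obtain ⟨x, hxA, hx⟩ := ((eventually_ge_atTop A).and (htop.eventually_gt_atTop (f A))).exists
    have hanti := strictAntiOn_of_deriv_neg (convex_Ici A) hf (by rwa [interior_Ici])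
    exact absurd hx (not_lt.2 (hanti.antitoneOn self_mem_Ici hxA hxA))
  · exact (strictMonoOn_of_deriv_pos (convex_Ici A) hf (by rwa [interior_Ici])).monotoneOn

theorem omega_eq_integral_deriv_sub {p : ℝ → ℝ} (hp : ContDiff ℝ 1 p) (hp0 : p 0 = 0) (a b : ℝ) :
    Omega p a b = ∫ t in (0 : ℝ)..a, (deriv p (b + t) - deriv p t) := by
  have hdiff := hp.differentiable one_ne_zero
  have hcont := hp.continuous_deriv le_rfl
  have hshift : IntervalIntegrable (fun t => deriv p (b + t)) MeasureTheory.volume 0 a :=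
    (hcont.comp (continuous_const_add b)).intervalIntegrable _ _
  rw [intervalIntegral.integral_sub hshift (hcont.intervalIntegrable _ _),
    intervalIntegral.integral_comp_add_left (deriv p),
    intervalIntegral.integral_deriv_eq_sub (fun x _ => hdiff x) (hcont.intervalIntegrable _ _),
    intervalIntegral.integral_deriv_eq_sub (fun x _ => hdiff x) (hcont.intervalIntegrable _ _),
    Omega, hp0, add_zero, add_comm a]
  ring

theorem abs_omega_bounds {p : ℝ → ℝ} {α A c C : ℝ} (hα : 0 < α) (hA : 0 < A) (hc : 0 < c)
    (hp : ContDiff ℝ 1 p) (hp0 : p 0 = 0)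
    (hdiff : ∀ x ∈ Ioi A, DifferentiableAt ℝ (deriv p) x)
    (hp'' : ∀ x ∈ Ioi A, deriv (deriv p) x ≠ 0)
    (hlow : ∀ x, A ≤ x → c * x ^ α ≤ |deriv p x|) (hup : ∀ x, A ≤ x → |deriv p x| ≤ C * x ^ α) :
    ∃ B c₁ C₁ : ℝ, 0 < c₁ ∧ ∀ a b, 0 ≤ a → a ≤ b → B ≤ b →
      c₁ * a * b ^ α ≤ |Omega p a b| ∧ |Omega p a b| ≤ C₁ * a * b ^ α := by
  have hp'_ne : ∀ x ∈ Ici A, deriv p x ≠ 0 := fun x hx =>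
    abs_pos.1 ((by have := hA.trans_le hx; positivity : 0 < c * x ^ α).trans_le (hlow x hx))
  wlog hpos : ∀ x ∈ Ici A, 0 < deriv p x generalizing p
  · have hneg : ∀ x ∈ Ici A, deriv p x < 0 :=
      (hasDerivWithinAt_forall_lt_or_forall_gt_of_forall_ne (convex_Ici A)
        (fun x _ => ((hp.differentiable one_ne_zero) x).hasDerivAt.hasDerivWithinAt)
        hp'_ne).resolve_right hpos
    have hderiv : deriv (-p) = -deriv p := deriv.neg'
    obtain ⟨B, c₁, C₁, hc₁, h⟩ := this (p := -p) hp.neg (by simp [hp0])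
      (by simpa only [hderiv] using fun x hx => (hdiff x hx).neg)
      (by simpa only [hderiv, deriv.neg', neg_ne_zero] using hp'')
      (by simpa only [hderiv, Pi.neg_apply, abs_neg] using hlow)
      (by simpa only [hderiv, Pi.neg_apply, abs_neg] using hup)
      (by simpa only [hderiv, Pi.neg_apply, neg_ne_zero] using hp'_ne)
      (by simpa only [hderiv, Pi.neg_apply, neg_pos] using hneg)
    exact ⟨B, c₁, C₁, hc₁, by simpa only [omega_neg, abs_neg] using h⟩
  have htop : Tendsto (deriv p) atTop atTop :=
    tendsto_atTop_mono' atTop ((eventually_ge_atTop A).mono fun x hx =>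
        (hlow x hx).trans (abs_of_pos (hpos x hx)).le)
      ((tendsto_rpow_atTop hα).const_mul_atTop hc)
  have hmono := monotoneOn_Ici_of_deriv_ne_zero (hp.continuous_deriv le_rfl).continuousOn
    hdiff hp'' htop
  obtain ⟨B, c₁, C₁, hc₁, h⟩ := integral_sub_bounds_of_monotoneOn hα hc
    (hp.continuous_deriv le_rfl) hmono
    (fun x hx => by simpa only [abs_of_pos (hpos x hx)] using hlow x hx)
    (fun x hx => by simpa only [abs_of_pos (hpos x hx)] using hup x hx)
  refine ⟨B, c₁, C₁, hc₁, fun a b ha hab hb => ?_⟩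
  obtain ⟨hlower, hupper⟩ := h a b ha hab hb
  have hnonneg : 0 ≤ c₁ * a * b ^ α := by
    have := ha.trans hab; positivity
  rw [omega_eq_integral_deriv_sub hp hp0, abs_of_nonneg (hnonneg.trans hlower)]
  exact ⟨hlower, hupper⟩

theorem stmt0_general (α : ℝ) (hα : 0 < α) (p : ℝ → ℝ)
    (hodd : ∀ ξ : ℝ, p (-ξ) = -p ξ)
    (hC1 : ContDiff ℝ 1 p)
    (hC2 : ContDiffOn ℝ 2 p {(0:ℝ)}ᶜ)
    (A c C : ℝ) (hA : 1 ≤ A) (hc : 0 < c)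
    (hd1 : ∀ ξ : ℝ, A ≤ |ξ| →
      c * |ξ| ^ α ≤ |deriv p ξ| ∧ |deriv p ξ| ≤ C * |ξ| ^ α)
    (hd2 : ∀ ξ : ℝ, A ≤ |ξ| →
      c * |ξ| ^ (α - 1) ≤ |deriv (deriv p) ξ| ∧ |deriv (deriv p) ξ| ≤ C * |ξ| ^ (α - 1)) :
    ∃ A' : ℝ, 1 ≤ A' ∧ ∃ lam₀ : ℝ, 0 < lam₀ ∧ lam₀ ≤ 1 ∧
      ∃ c' C' : ℝ, 0 < c' ∧ c' ≤ C' ∧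
        ∀ ξ₁ ξ₂ lam : ℝ, A' ≤ max |ξ₁| |ξ₂| → 0 < lam → lam ≤ lam₀ →
          c' * ximin ξ₁ ξ₂ * ximax ξ₁ ξ₂ ^ α
              ≤ lam ^ (α + 1) * |Omega p (ξ₁ / lam) (ξ₂ / lam)| ∧
          lam ^ (α + 1) * |Omega p (ξ₁ / lam) (ξ₂ / lam)|
              ≤ C' * ximin ξ₁ ξ₂ * ximax ξ₁ ξ₂ ^ α := by
  have hA0 : 0 < A := one_pos.trans_le hA
  have habs : ∀ x, A ≤ x → |x| = x := fun x hx => abs_of_pos (hA0.trans_le hx)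
  have hp0 : p 0 = 0 := by linarith [neg_zero (G := ℝ) ▸ hodd 0]
  have hdiff : ∀ x ∈ Ioi A, DifferentiableAt ℝ (deriv p) x := fun x hx =>
    ((hC2.deriv_of_isOpen isOpen_compl_singleton (by norm_num)).differentiableOn
      one_ne_zero).differentiableAt (isOpen_compl_singleton.mem_nhds (hA0.trans hx).ne')
  have hp'' : ∀ x ∈ Ioi A, deriv (deriv p) x ≠ 0 := fun x hx => by
    have hx' : A ≤ |x| := by rw [habs x hx.le]; exact hx.le
    have : 0 < |x| := hA0.trans_le hx'
    exact abs_pos.1 ((by positivity : 0 < c * |x| ^ (α - 1)).trans_le (hd2 x hx').1)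
  obtain ⟨B, c₁, C₁, hc₁, hbounds⟩ := abs_omega_bounds hα hA0 hc hC1 hp0 hdiff hp''
    (fun x hx => by simpa only [habs x hx] using (hd1 x (by rwa [habs x hx])).1)
    (fun x hx => by simpa only [habs x hx] using (hd1 x (by rwa [habs x hx])).2)
  obtain ⟨c', C', hc', hcC', hximax⟩ := abs_omega_bounds_of_ximax_ge hα hc₁ hodd hbounds
  refine ⟨max (2 * B) 1, le_max_right _ _, 1, one_pos, le_rfl, c', C', hc', hcC', ?_⟩
  intro ξ₁ ξ₂ lam hmax hlam hlam1
  have hB : 2 * B ≤ ximax (ξ₁ / lam) (ξ₂ / lam) := by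
    rw [ximax_div _ _ hlam]
    calc 2 * B ≤ max |ξ₁| |ξ₂| := (le_max_left _ _).trans hmax
      _ ≤ ximax ξ₁ ξ₂ := le_max_left _ _
      _ ≤ ximax ξ₁ ξ₂ / lam := le_div_self (ximax_nonneg _ _) hlam hlam1
  have hscale : ∀ K, K * ximin ξ₁ ξ₂ * ximax ξ₁ ξ₂ ^ α = lam ^ (α + 1) *
      (K * ximin (ξ₁ / lam) (ξ₂ / lam) * ximax (ξ₁ / lam) (ξ₂ / lam) ^ α) := fun K => by
    rw [ximin_div _ _ hlam, ximax_div _ _ hlam, div_rpow (ximax_nonneg _ _) hlam.le, rpow_add hlam, rpow_one]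
    field_simp
  obtain ⟨hlower, hupper⟩ := hximax _ _ hB
  rw [hscale, hscale]
  exact ⟨by gcongr, by gcongr⟩

theorem stmt0 (α : ℝ) (hα : 0 < α) (p : ℝ → ℝ)
    (hodd : ∀ ξ : ℝ, p (-ξ) = -p ξ)
    (hC1 : ContDiff ℝ 1 p)
    (hC2 : ContDiffOn ℝ 2 p {(0:ℝ)}ᶜ)
    (A c C : ℝ) (hA : 1 ≤ A) (hc : 0 < c) (hcC : c ≤ C)
    (hd1 : ∀ ξ : ℝ, A ≤ |ξ| →
      c * |ξ| ^ α ≤ |deriv p ξ| ∧ |deriv p ξ| ≤ C * |ξ| ^ α)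
    (hd2 : ∀ ξ : ℝ, A ≤ |ξ| →
      c * |ξ| ^ (α - 1) ≤ |deriv (deriv p) ξ| ∧ |deriv (deriv p) ξ| ≤ C * |ξ| ^ (α - 1)) :
    ∃ A' : ℝ, 1 ≤ A' ∧ ∃ lam₀ : ℝ, 0 < lam₀ ∧ lam₀ ≤ 1 ∧
      ∃ c' C' : ℝ, 0 < c' ∧ c' ≤ C' ∧
        ∀ ξ₁ ξ₂ lam : ℝ, A' ≤ max |ξ₁| |ξ₂| → 0 < lam → lam ≤ lam₀ →
          c' * ximin ξ₁ ξ₂ * ximax ξ₁ ξ₂ ^ α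
              ≤ lam ^ (α + 1) * |Omega p (ξ₁ / lam) (ξ₂ / lam)| ∧
          lam ^ (α + 1) * |Omega p (ξ₁ / lam) (ξ₂ / lam)|
              ≤ C' * ximin ξ₁ ξ₂ * ximax ξ₁ ξ₂ ^ α :=
  stmt0_general α hα p hodd hC1 hC2 A c C hA hc hd1 hd2
end
end

section
/- Let α > 0 and p(ξ) = ξ|ξ|^α (the symbol of the purely dispersive operator ∂_x D_x^α). Then there exist constants 0 < c ≤ C, depending only on α, such that for all (ξ₁, ξ₂) ∈ ℝ², c |ξ|_min |ξ|_max^α ≤ |Ω(ξ₁,ξ₂)| ≤ C |ξ|_min |ξ|_max^α. -/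
noncomputable section
open Real

/-!
For odd `p`, `Ω(ξ₁, ξ₂) = -(p ξ₁ + p ξ₂ + p ξ₃)` with `ξ₃ = -(ξ₁ + ξ₂)`, so `|Ω|`, `|ξ|_min` and
`|ξ|_max` are symmetric functions of three frequencies summing to zero and invariant under
negating all three. Two of the three frequencies share a sign, so we may assume `0 ≤ ξ₁ ≤ ξ₂`,
where `|ξ|_min = ξ₁`, `|ξ|_max = ξ₁ + ξ₂` and `Ω = (ξ₁ + ξ₂)^(1+α) - ξ₁^(1+α) - ξ₂^(1+α)`.
Bernoulli's inequality gives the tangent lines of `t ↦ t^(1+α)` at `ξ₂` and at `ξ₁ + ξ₂`, which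
place `(ξ₁ + ξ₂)^(1+α) - ξ₂^(1+α)` between `(1+α) ξ₁ ξ₂^α` and `(1+α) ξ₁ (ξ₁ + ξ₂)^α`. Then
`ξ₁^(1+α) ≤ ξ₁ ξ₂^α` and `ξ₂ ≥ (ξ₁ + ξ₂)/2` give the constants `c = α / 2^α`, `C = 1 + α`.
-/

theorem Real.rpow_add_mul_rpow_sub_one_mul_sub_le {q u v : ℝ} (hq : 1 ≤ q) (hu : 0 ≤ u)
    (hv : 0 < v) : v ^ q + q * v ^ (q - 1) * (u - v) ≤ u ^ q := by
  have hbern := one_add_mul_self_le_rpow_one_add (s := u / v - 1)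
    (by linarith [div_nonneg hu hv.le]) hq
  rw [add_sub_cancel, div_rpow hu hv.le, le_div_iff₀ (rpow_pos_of_pos hv q)] at hbern
  rw [rpow_sub_one hv.ne']
  calc v ^ q + q * (v ^ q / v) * (u - v) = (1 + q * (u / v - 1)) * v ^ q := by
        field_simp
    _ ≤ u ^ q := hbern

theorem Real.rpow_add_sub_rpow_le {q a b : ℝ} (hq : 1 ≤ q) (ha : 0 ≤ a) (hb : 0 ≤ b) :
    (a + b) ^ q - b ^ q ≤ q * a * (a + b) ^ (q - 1) := by
  rcases (add_nonneg ha hb).eq_or_lt with hab | hab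
  · obtain rfl : b = 0 := by linarith
    obtain rfl : a = 0 := by linarith
    simp
  · have := rpow_add_mul_rpow_sub_one_mul_sub_le hq hb hab
    linarith

theorem Real.mul_rpow_sub_one_le_rpow_add_sub_rpow {q a b : ℝ} (hq : 1 ≤ q) (ha : 0 ≤ a)
    (hb : 0 < b) : q * a * b ^ (q - 1) ≤ (a + b) ^ q - b ^ q := by
  have := rpow_add_mul_rpow_sub_one_mul_sub_le hq (add_nonneg ha hb.le) hb
  linarith

theorem omega_comm_s1 (p : ℝ → ℝ) (a b : ℝ) : Omega p b a = Omega p a b := by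
  simp only [Omega, add_comm b a]
  ring

theorem omega_neg_s1 {p : ℝ → ℝ} (hp : p.Odd) (a b : ℝ) : Omega p (-a) (-b) = -Omega p a b := by
  simp only [Omega, ← neg_add, hp _]
  ring

theorem omega_eq_of_add_add_eq_zero {p : ℝ → ℝ} (hp : p.Odd) {a b c : ℝ} (h : a + b + c = 0) :
    Omega p c b = Omega p a b := by
  obtain rfl : c = -(a + b) := by linarith
  simp only [Omega, show -(a + b) + b = -a by ring, hp _]
  ring

theorem ximin_comm_s1 (a b : ℝ) : ximin b a = ximin a b := by
  simp only [ximin, add_comm b a, min_comm |b| |a|]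

theorem ximax_comm_s1 (a b : ℝ) : ximax b a = ximax a b := by
  simp only [ximax, add_comm b a, max_comm |b| |a|]

theorem ximin_neg (a b : ℝ) : ximin (-a) (-b) = ximin a b := by
  simp only [ximin, ← neg_add, abs_neg]

theorem ximax_neg (a b : ℝ) : ximax (-a) (-b) = ximax a b := by
  simp only [ximax, ← neg_add, abs_neg]

theorem ximin_eq_of_add_add_eq_zero {a b c : ℝ} (h : a + b + c = 0) : ximin c b = ximin a b := by
  obtain rfl : c = -(a + b) := by linarith
  simp only [ximin, show -(a + b) + b = -a by ring, abs_neg]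
  ac_rfl

theorem ximax_eq_of_add_add_eq_zero {a b c : ℝ} (h : a + b + c = 0) : ximax c b = ximax a b := by
  obtain rfl : c = -(a + b) := by linarith
  simp only [ximax, show -(a + b) + b = -a by ring, abs_neg]
  ac_rfl

theorem forall_of_symmetric_of_nonneg_le (P : ℝ → ℝ → Prop) (comm : ∀ a b, P a b → P b a)
    (neg : ∀ a b, P a b → P (-a) (-b)) (rotate : ∀ a b c, a + b + c = 0 → P a b → P c b)
    (base : ∀ a b, 0 ≤ a → a ≤ b → P a b) (a b : ℝ) : P a b := by
  have of_nonneg : ∀ a b, 0 ≤ a → 0 ≤ b → P a b := fun a b ha hb =>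
    (le_total a b).elim (base a b ha) (fun hba => comm b a (base b a hb hba))
  have of_nonpos : ∀ a b, a ≤ 0 → b ≤ 0 → P a b := fun a b ha hb => by
    simpa using neg (-a) (-b) (of_nonneg _ _ (neg_nonneg.2 ha) (neg_nonneg.2 hb))
  rcases le_total 0 a with ha | ha <;> rcases le_total 0 b with hb | hb
  · exact of_nonneg a b ha hb
  · rcases le_total 0 (a + b) with hab | hab
    · exact rotate _ _ _ (by ring) (of_nonpos (-(a + b)) b (by linarith) hb)
    · exact comm _ _ (rotate _ _ _ (by ring) (of_nonneg (-(a + b)) a (by linarith) ha))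
  · rcases le_total 0 (a + b) with hab | hab
    · exact comm _ _ (rotate _ _ _ (by ring) (of_nonpos (-(a + b)) a (by linarith) ha))
    · exact rotate _ _ _ (by ring) (of_nonneg (-(a + b)) b (by linarith) hb)
  · exact of_nonpos a b ha hb

theorem odd_mul_abs_rpow (α : ℝ) : (fun ξ : ℝ => ξ * |ξ| ^ α).Odd := fun ξ => by
  simp only [abs_neg, neg_mul]

theorem omega_mul_abs_rpow_of_nonneg {α a b : ℝ} (hα : 0 ≤ α) (ha : 0 ≤ a) (hb : 0 ≤ b) :
    Omega (fun ξ : ℝ => ξ * |ξ| ^ α) a b = (a + b) ^ (1 + α) - a ^ (1 + α) - b ^ (1 + α) := by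
  have hα' : 1 + α ≠ 0 := by linarith
  simp only [Omega, abs_of_nonneg ha, abs_of_nonneg hb, abs_of_nonneg (add_nonneg ha hb),
    rpow_one_add' ha hα', rpow_one_add' hb hα', rpow_one_add' (add_nonneg ha hb) hα']

theorem ximin_of_nonneg_of_le_s1 {a b : ℝ} (ha : 0 ≤ a) (hab : a ≤ b) : ximin a b = a := by
  have hb := ha.trans hab
  rw [ximin, abs_of_nonneg ha, abs_of_nonneg hb, abs_of_nonneg (add_nonneg ha hb),
    min_eq_left hab, min_eq_left (by linarith)]

theorem ximax_of_nonneg_of_le {a b : ℝ} (ha : 0 ≤ a) (hab : a ≤ b) : ximax a b = a + b := by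
  have hb := ha.trans hab
  rw [ximax, abs_of_nonneg ha, abs_of_nonneg hb, abs_of_nonneg (add_nonneg ha hb),
    max_eq_right hab, max_eq_right (by linarith)]

theorem omega_mul_abs_rpow_bounds_of_nonneg_le {α a b : ℝ} (hα : 0 < α) (ha : 0 ≤ a)
    (hab : a ≤ b) :
    α / 2 ^ α * a * (a + b) ^ α ≤ Omega (fun ξ : ℝ => ξ * |ξ| ^ α) a b ∧
      Omega (fun ξ : ℝ => ξ * |ξ| ^ α) a b ≤ (1 + α) * a * (a + b) ^ α := by
  have hq : 1 ≤ 1 + α := by linarith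
  have hq' : 1 + α - 1 = α := add_sub_cancel_left 1 α
  rw [omega_mul_abs_rpow_of_nonneg hα.le ha (ha.trans hab)]
  refine ⟨?_, ?_⟩
  · rcases (ha.trans hab).eq_or_lt with rfl | hb
    · obtain rfl : a = 0 := le_antisymm hab ha
      simp [zero_rpow (by linarith : 1 + α ≠ 0)]
    have tangent := mul_rpow_sub_one_le_rpow_add_sub_rpow hq ha hb
    rw [hq'] at tangent
    have small : a ^ (1 + α) ≤ a * b ^ α := by
      rw [rpow_one_add' ha (by linarith)]
      gcongr
    have half : (a + b) ^ α / 2 ^ α ≤ b ^ α := by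
      rw [← div_rpow (by linarith) zero_le_two]
      gcongr
      linarith
    calc α / 2 ^ α * a * (a + b) ^ α = α * a * ((a + b) ^ α / 2 ^ α) := by ring
      _ ≤ α * a * b ^ α := by gcongr
      _ ≤ _ := by linarith
  · have secant := rpow_add_sub_rpow_le hq ha (ha.trans hab)
    rw [hq'] at secant
    linarith [rpow_nonneg ha (1 + α)]

theorem stmt1 (α : ℝ) (hα : 0 < α) :
    ∃ c C : ℝ, 0 < c ∧ c ≤ C ∧
      ∀ ξ₁ ξ₂ : ℝ,
        c * ximin ξ₁ ξ₂ * ximax ξ₁ ξ₂ ^ α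
            ≤ |Omega (fun ξ : ℝ => ξ * |ξ| ^ α) ξ₁ ξ₂| ∧
        |Omega (fun ξ : ℝ => ξ * |ξ| ^ α) ξ₁ ξ₂|
            ≤ C * ximin ξ₁ ξ₂ * ximax ξ₁ ξ₂ ^ α := by
  have hp := odd_mul_abs_rpow α
  refine ⟨α / 2 ^ α, 1 + α, by positivity, ?_, ?_⟩
  · linarith [div_le_self hα.le (one_le_rpow one_le_two hα.le)]
  refine forall_of_symmetric_of_nonneg_le _ (fun a b => ?_) (fun a b => ?_) (fun a b c h => ?_)
    (fun a b ha hab => ?_)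
  · rw [omega_comm_s1, ximin_comm_s1, ximax_comm_s1]
    exact id
  · rw [omega_neg_s1 hp, abs_neg, ximin_neg, ximax_neg]
    exact id
  · rw [omega_eq_of_add_add_eq_zero hp h, ximin_eq_of_add_add_eq_zero h,
      ximax_eq_of_add_add_eq_zero h]
    exact id
  · obtain ⟨lower, upper⟩ := omega_mul_abs_rpow_bounds_of_nonneg_le hα ha hab
    have hc : 0 ≤ α / 2 ^ α * a * (a + b) ^ α :=
      mul_nonneg (mul_nonneg (by positivity) ha) (rpow_nonneg (by linarith) α)
    rw [ximin_of_nonneg_of_le_s1 ha hab, ximax_of_nonneg_of_le ha hab, abs_of_nonneg (hc.trans lower)]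
    exact ⟨lower, upper⟩
end
end

section
/- Let p : ℝ → ℝ be defined by p(ξ) = ξ² coth(ξ) for ξ ≠ 0 and p(0) = 0 (the symbol of the linear Intermediate Long Wave operator ∂_x D_x coth(D_x)). Then p is odd, is C¹ on ℝ and C² on ℝ \ {0}, and there exist A ≥ 1 and constants 0 < c ≤ C such that for all ξ with |ξ| ≥ A one has c|ξ| ≤ |p′(ξ)| ≤ C|ξ| and c ≤ |p″(ξ)| ≤ C; that is, p satisfies the criterion of Lemma 2.1 with α = 1. -/
/-!
Off the origin `p(ξ) = ξ² cosh ξ / sinh ξ` is a smooth quotient. Near `0` one writes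
`p(ξ) = ξ cosh ξ · (ξ / sinh ξ)` and `p′(ξ) = 2 cosh ξ · (ξ / sinh ξ) - (ξ / sinh ξ)²`; since
`ξ / sinh ξ → 1`, both `p` and `p′` extend continuously to `0` (with `p′(0) = 1`), and the
derivative extension theorem makes `p` a `C¹` function.

For `ξ ≥ 4`, put `t = coth ξ ∈ [1, 2]` and `u = ξ / sinh ξ ∈ (0, 1]`, so that `ξ / sinh² ξ ≤ 1/4`.
Then `p′ = 2ξt - u²` lies in `[ξ, 4ξ]` and `p″ = 2t - 4ξ / sinh² ξ + 2u²t` lies in `[1, 8]`.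
Since `p′` is even and `p″` is odd, the same bounds hold in absolute value for `|ξ| ≥ 4`.
-/

noncomputable section
open Real

/-- The symbol of the linear Intermediate Long Wave operator `∂ₓ Dₓ coth(Dₓ)`:
`p(ξ) = ξ² coth ξ` for `ξ ≠ 0`, `p(0) = 0`. -/
def pILW (ξ : ℝ) : ℝ := if ξ = 0 then 0 else ξ ^ 2 * Real.cosh ξ / Real.sinh ξ

open Filter Topology Set Function
open scoped ContDiff

/- `p′` and `p″` off the origin. At `0` the formulas give the junk value `0`; the true
`p′ 0 = 1` is patched in with `Function.update` in `deriv_pILW`. -/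
def pILWDeriv (ξ : ℝ) : ℝ := 2 * ξ * (cosh ξ / sinh ξ) - (ξ / sinh ξ) ^ 2

def pILWDeriv2 (ξ : ℝ) : ℝ :=
  2 * (cosh ξ / sinh ξ) - 4 * (ξ / sinh ξ ^ 2) + 2 * (ξ / sinh ξ) ^ 2 * (cosh ξ / sinh ξ)

theorem pILW_neg (ξ : ℝ) : pILW (-ξ) = -pILW ξ := by
  by_cases hξ : ξ = 0
  · simp [pILW, hξ]
  · simp only [pILW, neg_eq_zero, hξ, if_false, cosh_neg, sinh_neg, neg_sq, div_neg]

theorem pILW_eqOn_compl_zero : EqOn pILW (fun x ↦ x ^ 2 * cosh x / sinh x) {0}ᶜ :=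
  fun _ hx ↦ if_neg hx

theorem contDiffOn_pILW : ContDiffOn ℝ ∞ pILW {0}ᶜ := by
  refine ContDiffOn.congr ?_ pILW_eqOn_compl_zero
  exact ((contDiff_id.pow 2).mul contDiff_cosh).contDiffOn.div contDiff_sinh.contDiffOn
    fun x hx ↦ sinh_ne_zero.mpr hx

theorem hasDerivAt_pILW_of_ne_zero {ξ : ℝ} (hξ : ξ ≠ 0) : HasDerivAt pILW (pILWDeriv ξ) ξ := by
  have hs : sinh ξ ≠ 0 := sinh_ne_zero.mpr hξ
  have h : HasDerivAt (fun x ↦ x ^ 2 * cosh x / sinh x)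
      (((2 * ξ * cosh ξ + ξ ^ 2 * sinh ξ) * sinh ξ - ξ ^ 2 * cosh ξ * cosh ξ) / sinh ξ ^ 2) ξ := by
    simpa using ((hasDerivAt_pow 2 ξ).fun_mul (hasDerivAt_cosh ξ)).fun_div (hasDerivAt_sinh ξ) hs
  refine (h.congr_deriv ?_).congr_of_eventuallyEq
    (pILW_eqOn_compl_zero.eventuallyEq_of_mem (isOpen_compl_singleton.mem_nhds hξ))
  rw [pILWDeriv]
  field_simp
  linear_combination (-ξ) * cosh_sq_sub_sinh_sq ξ

theorem tendsto_self_div_sinh_nhdsNE_zero :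
    Tendsto (fun x ↦ x / sinh x) (𝓝[≠] 0) (𝓝 1) := by
  have h := (hasDerivAt_iff_tendsto_slope.mp (hasDerivAt_sinh 0)).inv₀ (by simp)
  simp only [cosh_zero, inv_one] at h
  exact h.congr fun x ↦ by simp [slope_def_field]

theorem continuousAt_pILW_zero : ContinuousAt pILW 0 := by
  rw [← continuousWithinAt_compl_self, ContinuousWithinAt]
  have h : Tendsto (fun x ↦ x * cosh x) (𝓝[≠] 0) (𝓝 0) := by
    simpa using ((show Continuous fun x ↦ x * cosh x by fun_prop).tendsto 0).mono_left
      nhdsWithin_le_nhds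
  have h' : Tendsto (fun x ↦ x * cosh x * (x / sinh x)) (𝓝[≠] 0) (𝓝 0) := by
    simpa using h.mul tendsto_self_div_sinh_nhdsNE_zero
  rw [show pILW 0 = 0 from if_pos rfl]
  refine h'.congr' (eventually_mem_nhdsWithin.mono fun x hx ↦ ?_)
  rw [pILW_eqOn_compl_zero hx]
  ring

theorem tendsto_pILWDeriv_nhdsNE_zero : Tendsto pILWDeriv (𝓝[≠] 0) (𝓝 1) := by
  have hc : Tendsto cosh (𝓝[≠] 0) (𝓝 1) := by
    simpa using tendsto_nhdsWithin_of_tendsto_nhds (continuous_cosh.tendsto 0)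
  have h := ((hc.const_mul 2).mul tendsto_self_div_sinh_nhdsNE_zero).sub
    (tendsto_self_div_sinh_nhdsNE_zero.pow 2)
  norm_num at h
  refine h.congr' (Eventually.of_forall fun x ↦ ?_)
  simp only [pILWDeriv]
  ring

theorem hasDerivAt_pILW (ξ : ℝ) : HasDerivAt pILW (update pILWDeriv 0 1 ξ) ξ :=
  hasDerivAt_of_hasDerivAt_of_ne'
    (fun y hy ↦ by simpa [update_of_ne hy] using hasDerivAt_pILW_of_ne_zero hy)
    continuousAt_pILW_zero (continuousAt_update_same.mpr tendsto_pILWDeriv_nhdsNE_zero) ξ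

theorem deriv_pILW : deriv pILW = update pILWDeriv 0 1 :=
  funext fun ξ ↦ (hasDerivAt_pILW ξ).deriv

theorem contDiff_one_pILW : ContDiff ℝ 1 pILW := by
  refine contDiff_one_iff_deriv.mpr ⟨fun ξ ↦ (hasDerivAt_pILW ξ).differentiableAt, ?_⟩
  refine continuous_iff_continuousAt.mpr fun ξ ↦ ?_
  rcases eq_or_ne ξ 0 with rfl | hξ
  · rw [deriv_pILW]
    exact continuousAt_update_same.mpr tendsto_pILWDeriv_nhdsNE_zero
  · have h := contDiffOn_pILW.continuousOn_deriv_of_isOpen isOpen_compl_singleton (by simp)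
    exact h.continuousAt (isOpen_compl_singleton.mem_nhds hξ)

theorem hasDerivAt_pILWDeriv {ξ : ℝ} (hξ : ξ ≠ 0) : HasDerivAt pILWDeriv (pILWDeriv2 ξ) ξ := by
  have hs : sinh ξ ≠ 0 := sinh_ne_zero.mpr hξ
  have hcoth := (hasDerivAt_cosh ξ).fun_div (hasDerivAt_sinh ξ) hs
  have hu := (hasDerivAt_id' ξ).fun_div (hasDerivAt_sinh ξ) hs
  have h := (((hasDerivAt_id' ξ).const_mul 2).fun_mul hcoth).fun_sub (hu.fun_pow 2)
  refine h.congr_deriv ?_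
  simp only [pILWDeriv2, Nat.cast_ofNat, Nat.add_one_sub_one, pow_one, mul_one, one_mul]
  field_simp
  linear_combination (-2 * ξ * sinh ξ) * cosh_sq_sub_sinh_sq ξ

theorem deriv_deriv_pILW_of_ne_zero {ξ : ℝ} (hξ : ξ ≠ 0) :
    deriv (deriv pILW) ξ = pILWDeriv2 ξ := by
  have h : deriv pILW =ᶠ[𝓝 ξ] pILWDeriv := by
    filter_upwards [isOpen_compl_singleton.mem_nhds hξ] with y hy
    rw [deriv_pILW, update_of_ne hy]
  rw [h.deriv_eq, (hasDerivAt_pILWDeriv hξ).deriv]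

theorem pILWDeriv_neg (ξ : ℝ) : pILWDeriv (-ξ) = pILWDeriv ξ := by
  simp only [pILWDeriv, cosh_neg, sinh_neg, div_neg, neg_div, neg_neg]
  ring

theorem pILWDeriv2_neg (ξ : ℝ) : pILWDeriv2 (-ξ) = -pILWDeriv2 ξ := by
  simp only [pILWDeriv2, cosh_neg, sinh_neg, div_neg, neg_div, neg_neg]
  ring

theorem cosh_le_two_mul_sinh {ξ : ℝ} (hξ : 1 ≤ ξ) : cosh ξ ≤ 2 * sinh ξ := by
  have h1 : exp (-ξ) ≤ 1 := exp_le_one_iff.mpr (by linarith)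
  have h2 : ξ < sinh ξ := self_lt_sinh_iff.mpr (by linarith)
  linarith [cosh_sub_sinh ξ]

theorem pILWDeriv_bounds_of_four_le {ξ : ℝ} (hξ : 4 ≤ ξ) :
    (ξ ≤ pILWDeriv ξ ∧ pILWDeriv ξ ≤ 4 * ξ) ∧ (1 ≤ pILWDeriv2 ξ ∧ pILWDeriv2 ξ ≤ 8) := by
  have hs : ξ < sinh ξ := self_lt_sinh_iff.mpr (by linarith)
  have hs0 : 0 < sinh ξ := by linarith
  have ht₁ : 1 ≤ cosh ξ / sinh ξ := (one_le_div hs0).mpr (sinh_lt_cosh ξ).le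
  have ht₂ : cosh ξ / sinh ξ ≤ 2 := (div_le_iff₀ hs0).mpr (cosh_le_two_mul_sinh (by linarith))
  have hu₀ : 0 < ξ / sinh ξ := by positivity
  have hu₁ : ξ / sinh ξ ≤ 1 := (div_le_one hs0).mpr hs.le
  have hv₀ : 0 ≤ ξ / sinh ξ ^ 2 := by positivity
  have hv₁ : ξ / sinh ξ ^ 2 ≤ 1 / 4 := by
    rw [div_le_iff₀ (by positivity)]
    nlinarith
  simp only [pILWDeriv, pILWDeriv2]
  set t := cosh ξ / sinh ξ
  set u := ξ / sinh ξ
  have hu₂ : u ^ 2 ≤ 1 := pow_le_one₀ hu₀.le hu₁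
  have hut₀ : 0 ≤ u ^ 2 * t := by positivity
  have hut₁ : u ^ 2 * t ≤ 2 := by nlinarith
  refine ⟨⟨?_, ?_⟩, ?_, ?_⟩ <;> nlinarith

theorem abs_pILWDeriv_bounds_of_four_le_abs {ξ : ℝ} (hξ : 4 ≤ |ξ|) :
    (|ξ| ≤ |pILWDeriv ξ| ∧ |pILWDeriv ξ| ≤ 4 * |ξ|) ∧
      (1 ≤ |pILWDeriv2 ξ| ∧ |pILWDeriv2 ξ| ≤ 8) := by
  have hparity : pILWDeriv ξ = pILWDeriv |ξ| ∧ |pILWDeriv2 ξ| = |pILWDeriv2 (|ξ|)| := by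
    rcases abs_choice ξ with h | h <;> rw [h] <;> simp [pILWDeriv_neg, pILWDeriv2_neg]
  obtain ⟨⟨h₁, h₂⟩, h₃, h₄⟩ := pILWDeriv_bounds_of_four_le hξ
  rw [hparity.1, hparity.2, abs_of_nonneg (show 0 ≤ pILWDeriv |ξ| by linarith),
    abs_of_nonneg (show 0 ≤ pILWDeriv2 |ξ| by linarith)]
  exact ⟨⟨h₁, h₂⟩, h₃, h₄⟩

theorem stmt2 :
    (∀ ξ : ℝ, pILW (-ξ) = -pILW ξ) ∧
    ContDiff ℝ 1 pILW ∧
    ContDiffOn ℝ 2 pILW {(0:ℝ)}ᶜ ∧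
    ∃ A : ℝ, 1 ≤ A ∧ ∃ c C : ℝ, 0 < c ∧ c ≤ C ∧
      ∀ ξ : ℝ, A ≤ |ξ| →
        (c * |ξ| ≤ |deriv pILW ξ| ∧ |deriv pILW ξ| ≤ C * |ξ|) ∧
        (c ≤ |deriv (deriv pILW) ξ| ∧ |deriv (deriv pILW) ξ| ≤ C) := by
  refine ⟨pILW_neg, contDiff_one_pILW, contDiffOn_pILW.of_le (WithTop.coe_le_coe.mpr le_top),
    4, by norm_num, 1, 8, by norm_num, by norm_num, fun ξ hξ ↦ ?_⟩
  have hξ0 : ξ ≠ 0 := abs_pos.mp (by linarith)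
  rw [deriv_deriv_pILW_of_ne_zero hξ0, deriv_pILW, update_of_ne hξ0, one_mul]
  obtain ⟨⟨h₁, h₂⟩, h₃, h₄⟩ := abs_pILWDeriv_bounds_of_four_le_abs hξ
  exact ⟨⟨h₁, by linarith⟩, h₃, h₄⟩
end
end
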